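/- In a hyperbolic group, there is a uniform bound c such that every finite-order element has order at most c; consequently, an element g has infinite order if and only if g^k ≠ 1 for all k with 1 ≤ k ≤ c. -/
import Mathlib


/-- The element of the group `G` represented by the word `w` over the
generating set, where `σ` maps generators to group elements. -/
def evalW {α : Type*} {G : Type*} [Group G] (σ : α → G) (w : List α) : G :=
  (w.map σ).prod

/-- The word length of a group element: the smallest length of a word over the
generators representing it. -/
noncomputable def wlen {α : Type*} {G : Type*} [Group G] (σ : α → G) (g : G) : ℕ :=
  sInf {n | ∃ w : List α, evalW σ w = g ∧ w.length = n}

/-- The word metric on the Cayley graph of `G` with respect to `σ`. -/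
noncomputable def gdist {α : Type*} {G : Type*} [Group G] (σ : α → G) (g h : G) : ℕ :=
  wlen σ (g⁻¹ * h)

/-- `σ` lists a generating set of `G`: every element is represented by a word. -/
def Generates {α : Type*} {G : Type*} [Group G] (σ : α → G) : Prop :=
  ∀ g : G, ∃ w : List α, evalW σ w = g

/-- The generating set is symmetric: it is closed under inversion. -/
def SymmetricGens {α : Type*} {G : Type*} [Group G] (σ : α → G) : Prop :=
  ∀ a : α, ∃ b : α, σ b = (σ a)⁻¹

/-- A word is geodesic if it labels a geodesic path in the Cayley graph,
i.e. its length equals the word length of the element it represents. -/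
def IsGeodesicWord {α : Type*} {G : Type*} [Group G] (σ : α → G) (w : List α) : Prop :=
  wlen σ (evalW σ w) = w.length

/-- The Cayley graph of `G` (w.r.t. `σ`) is `δ`-hyperbolic: every geodesic
triangle is `δ`-slim.  A triangle is encoded by geodesic words `x, y, z` with
`eval x · eval y · eval z = 1`; the side labelled `x` starts at `1`, the side
labelled `y` starts at `eval x`, the side labelled `z` starts at `eval x · eval y`.
Slimness: every point on the first side is within distance `δ` of the union of
the other two sides (by symmetry of the quantification this applies to each side). -/
def DeltaHyperbolic {α : Type*} {G : Type*} [Group G] (σ : α → G) (δ : ℕ) : Prop :=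
  ∀ x y z : List α, IsGeodesicWord σ x → IsGeodesicWord σ y → IsGeodesicWord σ z →
    evalW σ x * evalW σ y * evalW σ z = 1 →
    ∀ i ≤ x.length, ∃ j : ℕ,
      (j ≤ y.length ∧
        gdist σ (evalW σ (x.take i)) (evalW σ x * evalW σ (y.take j)) ≤ δ) ∨
      (j ≤ z.length ∧
        gdist σ (evalW σ (x.take i)) (evalW σ x * evalW σ y * evalW σ (z.take j)) ≤ δ)

section Aux

variable {α : Type*} {G : Type*} [Group G]

lemma evalW_append (σ : α → G) (w v : List α) :
    evalW σ (w ++ v) = evalW σ w * evalW σ v := by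
  simp [evalW]

lemma wlen_le (σ : α → G) (w : List α) : wlen σ (evalW σ w) ≤ w.length :=
  Nat.sInf_le ⟨w, rfl, rfl⟩

lemma exists_geodesic (σ : α → G) (hgen : Generates σ) (g : G) :
    ∃ w : List α, evalW σ w = g ∧ w.length = wlen σ g := by
  have h : {n | ∃ w : List α, evalW σ w = g ∧ w.length = n}.Nonempty := by
    obtain ⟨w, hw⟩ := hgen g; exact ⟨w.length, w, hw, rfl⟩
  obtain ⟨w, hw, hl⟩ := Nat.sInf_mem h
  exact ⟨w, hw, hl⟩

lemma geodesic_isGeodesicWord (σ : α → G) {g : G} {w : List α}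
    (hw : evalW σ w = g) (hl : w.length = wlen σ g) : IsGeodesicWord σ w := by
  rw [IsGeodesicWord, hw, hl]

lemma wlen_mul_le (σ : α → G) (hgen : Generates σ) (g h : G) :
    wlen σ (g * h) ≤ wlen σ g + wlen σ h := by
  obtain ⟨w, hw, hwl⟩ := exists_geodesic σ hgen g
  obtain ⟨v, hv, hvl⟩ := exists_geodesic σ hgen h
  calc wlen σ (g * h) ≤ (w ++ v).length := by
        rw [← hw, ← hv, ← evalW_append]; exact wlen_le _ _
    _ = wlen σ g + wlen σ h := by simp [hwl, hvl]

lemma exists_inv_word (σ : α → G) (hsym : SymmetricGens σ) (w : List α) :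
    ∃ v : List α, evalW σ v = (evalW σ w)⁻¹ ∧ v.length = w.length := by
  induction w with
  | nil => exact ⟨[], by simp [evalW], rfl⟩
  | cons a t ih =>
    obtain ⟨v, hv, hvl⟩ := ih
    obtain ⟨b, hb⟩ := hsym a
    refine ⟨v ++ [b], ?_, by simp [hvl]⟩
    rw [evalW_append, hv]
    simp [evalW, hb, mul_inv_rev]

lemma wlen_inv (σ : α → G) (hgen : Generates σ) (hsym : SymmetricGens σ) (g : G) :
    wlen σ g⁻¹ = wlen σ g := by
  have key : ∀ h : G, wlen σ h⁻¹ ≤ wlen σ h := by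
    intro h
    obtain ⟨w, hw, hwl⟩ := exists_geodesic σ hgen h
    obtain ⟨v, hv, hvl⟩ := exists_inv_word σ hsym w
    calc wlen σ h⁻¹ ≤ v.length := by rw [← hw, ← hv]; exact wlen_le _ _
      _ = wlen σ h := by rw [hvl, hwl]
  refine le_antisymm (key g) ?_
  simpa using key g⁻¹

lemma gdist_comm (σ : α → G) (hgen : Generates σ) (hsym : SymmetricGens σ) (g h : G) :
    gdist σ g h = gdist σ h g := by
  rw [gdist, gdist, ← wlen_inv σ hgen hsym]
  simp [mul_inv_rev]

lemma gdist_mul_left (σ : α → G) (a g h : G) :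
    gdist σ (a * g) (a * h) = gdist σ g h := by
  simp [gdist, mul_assoc, mul_inv_rev]

lemma gdist_triangle (σ : α → G) (hgen : Generates σ) (a b c : G) :
    gdist σ a c ≤ gdist σ a b + gdist σ b c := by
  have : a⁻¹ * c = (a⁻¹ * b) * (b⁻¹ * c) := by group
  rw [gdist, this]
  exact wlen_mul_le σ hgen _ _

lemma wlen_take_drop (σ : α → G) (hgen : Generates σ) (w : List α)
    (hw : IsGeodesicWord σ w) {i : ℕ} (hi : i ≤ w.length) :
    wlen σ (evalW σ (w.take i)) = i ∧ wlen σ (evalW σ (w.drop i)) = w.length - i := by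
  have h1 : wlen σ (evalW σ (w.take i)) ≤ i := by
    have := wlen_le σ (w.take i)
    simpa [List.length_take, Nat.min_eq_left hi] using this
  have h2 : wlen σ (evalW σ (w.drop i)) ≤ w.length - i := by
    have := wlen_le σ (w.drop i)
    simpa using this
  have h3 : evalW σ (w.take i) * evalW σ (w.drop i) = evalW σ w := by
    rw [← evalW_append, List.take_append_drop]
  have h4 : w.length ≤ wlen σ (evalW σ (w.take i)) + wlen σ (evalW σ (w.drop i)) := by
    rw [← hw, ← h3]
    exact wlen_mul_le σ hgen _ _
  omega

end Aux

section Center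

variable {α : Type*} {G : Type*} [Group G]

lemma center_bound (σ : α → G) (δ : ℕ) (hgen : Generates σ) (hsym : SymmetricGens σ)
    (hhyp : DeltaHyperbolic σ δ) (Y : Finset G) (hY : Y.Nonempty) (r : ℕ) (x x' : G)
    (hx : ∀ y ∈ Y, gdist σ x y ≤ r) (hx' : ∀ y ∈ Y, gdist σ x' y ≤ r)
    (hmin : ∀ z : G, r ≤ Y.sup (fun y => gdist σ z y)) :
    gdist σ x x' ≤ 4 * δ + 1 := by
  set D := gdist σ x x' with hD
  obtain ⟨w, hw, hwl⟩ := exists_geodesic σ hgen (x⁻¹ * x')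
  have hwgeo : IsGeodesicWord σ w := geodesic_isGeodesicWord σ hw hwl
  have hwD : w.length = D := hwl
  set i := D / 2 with hi
  have hiD : 2 * i ≤ D ∧ D ≤ 2 * i + 1 := by
    rw [hi]; omega
  set m := x * evalW σ (w.take i) with hm
  have him : i ≤ w.length := by omega
  have hxm : gdist σ x m = i := by
    rw [hm, gdist]
    have : x⁻¹ * (x * evalW σ (w.take i)) = evalW σ (w.take i) := by group
    rw [this]
    exact (wlen_take_drop σ hgen w hwgeo him).1
  have hx'm : gdist σ x' m = D - i := by
    rw [hm, gdist]
    have h1 : x'⁻¹ * (x * evalW σ (w.take i)) = (evalW σ (w.drop i))⁻¹ := by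
      have h3 : evalW σ (w.take i) * evalW σ (w.drop i) = evalW σ w := by
        rw [← evalW_append, List.take_append_drop]
      rw [hw] at h3
      rw [eq_inv_iff_mul_eq_one]
      calc x'⁻¹ * (x * evalW σ (w.take i)) * evalW σ (w.drop i)
          = x'⁻¹ * (x * (evalW σ (w.take i) * evalW σ (w.drop i))) := by group
        _ = 1 := by rw [h3]; group
    rw [h1, wlen_inv σ hgen hsym]
    have := (wlen_take_drop σ hgen w hwgeo him).2
    rw [this, hwD]
  -- key claim
  have key : ∀ y ∈ Y, gdist σ m y + i ≤ 2 * δ + r := by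
    intro y hy
    obtain ⟨v, hv, hvl⟩ := exists_geodesic σ hgen (x'⁻¹ * y)
    obtain ⟨u, hu, hul⟩ := exists_geodesic σ hgen (y⁻¹ * x)
    have hvgeo := geodesic_isGeodesicWord σ hv hvl
    have hugeo := geodesic_isGeodesicWord σ hu hul
    have hprod : evalW σ w * evalW σ v * evalW σ u = 1 := by
      rw [hw, hv, hu]; group
    obtain ⟨j, hj⟩ := hhyp w v u hwgeo hvgeo hugeo hprod i him
    have hvr : v.length ≤ r := by
      rw [hvl]; exact hx' y hy
    have hur : u.length ≤ r := by
      rw [hul, ← gdist]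
      rw [gdist_comm σ hgen hsym]
      exact hx y hy
    rcases hj with ⟨hjv, hd⟩ | ⟨hju, hd⟩
    · -- close to side from x' to y
      set q := x' * evalW σ (v.take j) with hq
      have hmq : gdist σ m q ≤ δ := by
        have : gdist σ m q =
            gdist σ (evalW σ (w.take i)) (evalW σ w * evalW σ (v.take j)) := by
          rw [hm, hq, hw]
          rw [show x' * evalW σ (v.take j) = x * ((x⁻¹ * x') * evalW σ (v.take j)) by group]
          rw [gdist_mul_left]
        rw [this]; exact hd
      have hqy : gdist σ q y = v.length - j := by
        rw [hq, gdist]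
        have h1 : (x' * evalW σ (v.take j))⁻¹ * y = evalW σ (v.drop j) := by
          have h3 : evalW σ (v.take j) * evalW σ (v.drop j) = x'⁻¹ * y := by
            rw [← evalW_append, List.take_append_drop, hv]
          calc (x' * evalW σ (v.take j))⁻¹ * y
              = (evalW σ (v.take j))⁻¹ * (x'⁻¹ * y) := by group
            _ = evalW σ (v.drop j) := by rw [← h3]; group
        rw [h1]
        exact (wlen_take_drop σ hgen v hvgeo hjv).2
      have hx'q : gdist σ x' q = j := by
        rw [hq, gdist]
        have : x'⁻¹ * (x' * evalW σ (v.take j)) = evalW σ (v.take j) := by group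
        rw [this]
        exact (wlen_take_drop σ hgen v hvgeo hjv).1
      have t1 : gdist σ x' m ≤ gdist σ x' q + gdist σ q m :=
        gdist_triangle σ hgen _ _ _
      have hqm : gdist σ q m = gdist σ m q := gdist_comm σ hgen hsym _ _
      have t2 : gdist σ m y ≤ gdist σ m q + gdist σ q y :=
        gdist_triangle σ hgen _ _ _
      rw [hx'm] at t1
      omega
    · -- close to side from y to x
      set q := y * evalW σ (u.take j) with hq
      have hmq : gdist σ m q ≤ δ := by
        have : gdist σ m q =
            gdist σ (evalW σ (w.take i)) (evalW σ w * evalW σ v * evalW σ (u.take j)) := by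
          rw [hm, hq, hw, hv]
          rw [show y * evalW σ (u.take j)
              = x * ((x⁻¹ * x') * (x'⁻¹ * y) * evalW σ (u.take j)) by group]
          rw [gdist_mul_left]
        rw [this]; exact hd
      have hqx : gdist σ q x = u.length - j := by
        rw [hq, gdist]
        have h1 : (y * evalW σ (u.take j))⁻¹ * x = evalW σ (u.drop j) := by
          have h3 : evalW σ (u.take j) * evalW σ (u.drop j) = y⁻¹ * x := by
            rw [← evalW_append, List.take_append_drop, hu]
          calc (y * evalW σ (u.take j))⁻¹ * x
              = (evalW σ (u.take j))⁻¹ * (y⁻¹ * x) := by group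
            _ = evalW σ (u.drop j) := by rw [← h3]; group
        rw [h1]
        exact (wlen_take_drop σ hgen u hugeo hju).2
      have hyq : gdist σ y q = j := by
        rw [hq, gdist]
        have : y⁻¹ * (y * evalW σ (u.take j)) = evalW σ (u.take j) := by group
        rw [this]
        exact (wlen_take_drop σ hgen u hugeo hju).1
      have t1 : gdist σ x m ≤ gdist σ x q + gdist σ q m :=
        gdist_triangle σ hgen _ _ _
      have hxq : gdist σ x q = gdist σ q x := gdist_comm σ hgen hsym _ _
      have hqm : gdist σ q m = gdist σ m q := gdist_comm σ hgen hsym _ _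
      have t2 : gdist σ m y ≤ gdist σ m q + gdist σ q y :=
        gdist_triangle σ hgen _ _ _
      have hqy : gdist σ q y = gdist σ y q := gdist_comm σ hgen hsym _ _
      rw [hxm] at t1
      omega
  obtain ⟨y₀, hy₀, hsup⟩ := Finset.exists_mem_eq_sup Y hY (fun y => gdist σ m y)
  have h1 : r ≤ gdist σ m y₀ := by
    have := hmin m
    rw [hsup] at this
    exact this
  have h2 := key y₀ hy₀
  omega

end Center

/-- In a hyperbolic group there is a uniform bound `c` on the orders of
finite-order elements; consequently an element has infinite order iff
`g^k ≠ 1` for all `1 ≤ k ≤ c`. -/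
theorem hyperbolic_uniform_torsion_bound {α : Type*} {G : Type*} [Group G]
    [Fintype α] (σ : α → G) (δ : ℕ)
    (hgen : Generates σ) (hsym : SymmetricGens σ) (hhyp : DeltaHyperbolic σ δ) :
    ∃ c : ℕ, 0 < c ∧ (∀ g : G, IsOfFinOrder g → orderOf g ≤ c) ∧
      ∀ g : G, (¬ IsOfFinOrder g ↔ ∀ k : ℕ, 1 ≤ k → k ≤ c → g ^ k ≠ 1) := by
  classical
  set B := 4 * δ + 1 with hB
  -- the ball of radius B is finite
  have hfin : {h : G | wlen σ h ≤ B}.Finite := by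
    have hsub : {h : G | wlen σ h ≤ B} ⊆ evalW σ '' {w : List α | w.length ≤ B} := by
      intro h hh
      obtain ⟨w, hw, hwl⟩ := exists_geodesic σ hgen h
      exact ⟨w, by rw [Set.mem_setOf_eq, hwl]; exact hh, hw⟩
    exact ((List.finite_length_le α B).image _).subset hsub
  -- every torsion element is conjugate into the ball of radius B
  have conj_bound : ∀ g : G, IsOfFinOrder g → ∃ x : G, wlen σ (x⁻¹ * g * x) ≤ B := by
    intro g hg
    set n := orderOf g with hn
    have hn0 : 0 < n := hg.orderOf_pos
    set Y : Finset G := (Finset.range n).image (g ^ ·) with hY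
    have hYne : Y.Nonempty := ⟨g ^ 0, by
      rw [hY]; exact Finset.mem_image.2 ⟨0, Finset.mem_range.2 hn0, rfl⟩⟩
    have hYinv : ∀ y ∈ Y, g⁻¹ * y ∈ Y := by
      intro y hy
      rw [hY] at hy ⊢
      obtain ⟨k, hk, hky⟩ := Finset.mem_image.1 hy
      rw [Finset.mem_range] at hk
      rcases Nat.eq_zero_or_pos k with hk0 | hk1
      · refine Finset.mem_image.2 ⟨n - 1, Finset.mem_range.2 (by omega), ?_⟩
        have h1 : g ^ (n - 1) * g = 1 := by
          rw [← pow_succ, show n - 1 + 1 = n by omega, hn, pow_orderOf_eq_one]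
        rw [← hky, hk0, pow_zero, mul_one]
        exact eq_inv_of_mul_eq_one_left h1
      · refine Finset.mem_image.2 ⟨k - 1, Finset.mem_range.2 (by omega), ?_⟩
        have : g ^ k = g * g ^ (k - 1) := by
          rw [← pow_succ', show k - 1 + 1 = k by omega]
        rw [← hky, this]
        group
    set f : G → ℕ := fun z => Y.sup (fun y => gdist σ z y) with hf
    have hfr : (Set.range f).Nonempty := ⟨f 1, 1, rfl⟩
    set r := sInf (Set.range f) with hr
    obtain ⟨x₀, hx₀⟩ := Nat.sInf_mem hfr
    have hx : ∀ y ∈ Y, gdist σ x₀ y ≤ r := by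
      intro y hy
      calc gdist σ x₀ y ≤ f x₀ := Finset.le_sup hy
        _ = r := hx₀
    have hx' : ∀ y ∈ Y, gdist σ (g * x₀) y ≤ r := by
      intro y hy
      have he : gdist σ (g * x₀) y = gdist σ x₀ (g⁻¹ * y) := by
        simp [gdist, mul_inv_rev, mul_assoc]
      rw [he]
      exact hx _ (hYinv y hy)
    have hmin : ∀ z : G, r ≤ f z := fun z => Nat.sInf_le ⟨z, rfl⟩
    have hcb := center_bound σ δ hgen hsym hhyp Y hYne r x₀ (g * x₀) hx hx' hmin
    refine ⟨x₀, ?_⟩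
    rw [gdist, ← mul_assoc] at hcb
    exact hcb
  -- define the bound
  set c := max 1 (hfin.toFinset.sup orderOf) with hc
  refine ⟨c, le_max_left 1 _, ?_, ?_⟩
  · intro g hg
    obtain ⟨x, hx⟩ := conj_bound g hg
    have horder : orderOf (x⁻¹ * g * x) = orderOf g := by
      have := (MulAut.conj x⁻¹).orderOf_eq g
      simpa [MulAut.conj_apply] using this
    have hmem : x⁻¹ * g * x ∈ hfin.toFinset := hfin.mem_toFinset.2 hx
    calc orderOf g = orderOf (x⁻¹ * g * x) := horder.symm
      _ ≤ hfin.toFinset.sup orderOf := Finset.le_sup hmem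
      _ ≤ c := le_max_right _ _
  · intro g
    constructor
    · intro hg k hk1 _ hgk
      exact hg (isOfFinOrder_iff_pow_eq_one.2 ⟨k, by omega, hgk⟩)
    · intro h hg
      obtain ⟨x, hx⟩ := conj_bound g hg
      have horder : orderOf (x⁻¹ * g * x) = orderOf g := by
        have := (MulAut.conj x⁻¹).orderOf_eq g
        simpa [MulAut.conj_apply] using this
      have hmem : x⁻¹ * g * x ∈ hfin.toFinset := hfin.mem_toFinset.2 hx
      have hle : orderOf g ≤ c := by
        calc orderOf g = orderOf (x⁻¹ * g * x) := horder.symm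
          _ ≤ hfin.toFinset.sup orderOf := Finset.le_sup hmem
          _ ≤ c := le_max_right _ _
      exact h (orderOf g) hg.orderOf_pos hle (pow_orderOf_eq_one g)
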